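/- Let n ≥ 2, let a_1, …, a_n be elements of a commutative ring, let c_0 = 1 and c_1, c_2, … be ring elements with c_i = 0 for i < 0. Define K_{i,j} = h_i(a_1,…,a_{n−j+1})·(c_1 c_{j−i−1} − c_{j−i}) + (a_1 + ⋯ + a_n)·h_{i−1}(a_1,…,a_{n−j+1})·c_{j−i}, where h_i denotes the i-th complete homogeneous symmetric function (h_0 = 1, h_i = 0 for i < 0), and let e_r^{(k)} denote the r-th elementary symmetric function of a_1, …, a_k. Then for all j = 2, …, n and all m = 2, …, j, ∑_{r=0}^{m} (−1)^r · e_r^{(n−j+r)} · K_{m−r, j−r} = 0. -/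

import Mathlib

/-- The `r`-th elementary symmetric function of the first `k` variables `a 0, …, a (k-1)`. -/
def esymmTrunc {R : Type*} [CommRing R] (a : ℕ → R) (k r : ℕ) : R :=
  ∑ s ∈ (Finset.range k).powersetCard r, ∏ t ∈ s, a t

/-- The `i`-th complete homogeneous symmetric function of the first `j` variables
`a 0, …, a (j-1)`, with `h_i = 0` for `i < 0` (the index `i` ranges over `ℤ`). -/
def hsymmTruncZ {R : Type*} [CommRing R] (a : ℕ → R) (j : ℕ) (i : ℤ) : R :=
  if 0 ≤ i then
    ∑ d ∈ Finset.Nat.antidiagonalTuple j i.toNat, ∏ k : Fin j, a (k : ℕ) ^ d k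
  else 0

/-- The quantity `K_{i,j} = h_i(a_1,…,a_{n−j+1})·(c_1 c_{j−i−1} − c_{j−i})
 + (a_1 + ⋯ + a_n)·h_{i−1}(a_1,…,a_{n−j+1})·c_{j−i}`. -/
def Kcoef {R : Type*} [CommRing R] (n : ℕ) (a : ℕ → R) (c : ℤ → R) (i j : ℕ) : R :=
  hsymmTruncZ a (n - j + 1) (i : ℤ) * (c 1 * c ((j : ℤ) - i - 1) - c ((j : ℤ) - i)) +
    (∑ r ∈ Finset.range n, a r) * hsymmTruncZ a (n - j + 1) ((i : ℤ) - 1) * c ((j : ℤ) - i)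

/-!
Each `K_{m-r, j-r}` is a combination of `h_{m-r}` and `h_{m-1-r}` in the first `n - j + r + 1`
variables, with coefficients that do not depend on `r`. So it suffices that for `0 < M`
  `∑_r (-1)^r e_r(a_0, …, a_{k+r-1}) h_{M-r}(a_0, …, a_{k+r}) = 0`.
Splitting off the last variable of each `h` and absorbing it into the `e` of the next term
(the Pascal-type recurrences of `h` and `e`) telescopes this sum into the same sum for `k - 1`,
and for `k = 0` every term of the resulting sum vanishes.
-/

open Finset

theorem Multiset.esymm_cons {R : Type*} [CommSemiring R] (x : R) (s : Multiset R) (r : ℕ) :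
    (x ::ₘ s).esymm (r + 1) = s.esymm (r + 1) + x * s.esymm r := by
  simp [Multiset.esymm, Multiset.powersetCard_cons, Multiset.map_map,
    Multiset.sum_map_mul_left]

theorem Finset.Nat.sum_antidiagonalTuple_succ {R : Type*} [CommSemiring R] (j n : ℕ)
    (f : Fin (j + 1) → ℕ → R) :
    ∑ d ∈ Nat.antidiagonalTuple (j + 1) n, ∏ k, f k (d k)
      = ∑ p ∈ antidiagonal n, f (Fin.last j) p.1 *
          ∑ d ∈ Nat.antidiagonalTuple j p.2, ∏ k : Fin j, f k.castSucc (d k) := by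
  simp_rw [mul_sum]
  rw [sum_sigma']
  refine sum_nbij' (fun d => ⟨(d (Fin.last j), ∑ k : Fin j, d k.castSucc), Fin.init d⟩)
    (fun x => Fin.snoc x.2 x.1.1) ?_ ?_ ?_ ?_ ?_
  · intro d hd
    rw [Nat.mem_antidiagonalTuple, Fin.sum_univ_castSucc] at hd
    simp [Nat.mem_antidiagonalTuple, ← hd, add_comm, Fin.init]
  · rintro ⟨⟨p₁, p₂⟩, d⟩ hx
    simp only [mem_sigma, HasAntidiagonal.mem_antidiagonal, Nat.mem_antidiagonalTuple] at hx
    simp [Nat.mem_antidiagonalTuple, Fin.sum_univ_castSucc, hx.2, ← hx.1, add_comm]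
  · intro d _
    exact Fin.snoc_init_self d
  · rintro ⟨⟨p₁, p₂⟩, d⟩ hx
    simp only [mem_sigma, HasAntidiagonal.mem_antidiagonal, Nat.mem_antidiagonalTuple] at hx
    simp [hx.2, Fin.init_snoc]
  · intro d _
    rw [Fin.prod_univ_castSucc, mul_comm]
    rfl

section SymmetricFunctions

variable {R : Type*} [CommRing R] (a : ℕ → R)

theorem esymmTrunc_eq_esymm (k r : ℕ) :
    esymmTrunc a k r = ((Multiset.range k).map a).esymm r := by
  rw [esymmTrunc, ← Finset.esymm_map_val, range_val]

theorem esymmTrunc_zero (k : ℕ) : esymmTrunc a k 0 = 1 := by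
  simp [esymmTrunc]

theorem esymmTrunc_of_lt {k r : ℕ} (h : k < r) : esymmTrunc a k r = 0 := by
  rw [esymmTrunc, powersetCard_eq_empty.mpr (by simpa using h), sum_empty]

theorem esymmTrunc_succ (k r : ℕ) :
    esymmTrunc a (k + 1) (r + 1) = esymmTrunc a k (r + 1) + a k * esymmTrunc a k r := by
  simp only [esymmTrunc_eq_esymm, Multiset.range_succ, Multiset.map_cons, Multiset.esymm_cons]

theorem hsymmTruncZ_natCast (j n : ℕ) :
    hsymmTruncZ a j n = ∑ d ∈ Nat.antidiagonalTuple j n, ∏ k : Fin j, a k ^ d k := by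
  simp [hsymmTruncZ]

theorem hsymmTruncZ_of_neg (j : ℕ) {i : ℤ} (h : i < 0) : hsymmTruncZ a j i = 0 := by
  simp [hsymmTruncZ, not_le.mpr h]

theorem hsymmTruncZ_zero (j : ℕ) : hsymmTruncZ a j 0 = 1 := by
  simpa [Nat.antidiagonalTuple_zero_right] using hsymmTruncZ_natCast a j 0

theorem hsymmTruncZ_zero_vars_of_pos {i : ℤ} (h : 0 < i) : hsymmTruncZ a 0 i = 0 := by
  lift i to ℕ using h.le
  obtain ⟨n, rfl⟩ := Nat.exists_eq_add_one_of_ne_zero (by omega : i ≠ 0)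
  rw [hsymmTruncZ_natCast, Nat.antidiagonalTuple_zero_succ, sum_empty]

theorem hsymmTruncZ_succ (j : ℕ) (i : ℤ) :
    hsymmTruncZ a (j + 1) i = hsymmTruncZ a j i + a j * hsymmTruncZ a (j + 1) (i - 1) := by
  rcases lt_trichotomy i 0 with h | rfl | h
  · simp [hsymmTruncZ_of_neg a _ h, hsymmTruncZ_of_neg a _ (by omega : i - 1 < 0)]
  · simp [hsymmTruncZ_zero, hsymmTruncZ_of_neg a _ (by omega : (-1 : ℤ) < 0)]
  · lift i to ℕ using h.le
    obtain ⟨n, rfl⟩ := Nat.exists_eq_add_one_of_ne_zero (by omega : i ≠ 0)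
    rw [Nat.cast_succ, add_sub_cancel_right, ← Nat.cast_succ]
    simp only [hsymmTruncZ_natCast, Nat.sum_antidiagonalTuple_succ (f := fun k e => a k ^ e),
      Nat.antidiagonal_succ, sum_cons, sum_map, mul_sum]
    simp [pow_succ, mul_left_comm, mul_assoc]

theorem sum_esymmTrunc_mul_hsymmTruncZ_telescope (j N : ℕ) (M : ℤ) :
    ∑ r ∈ range (N + 1),
        (-1) ^ r * esymmTrunc a (j + r) r * hsymmTruncZ a (j + r + 1) (M - r)
      = hsymmTruncZ a j M
        + ∑ r ∈ range N, (-1) ^ (r + 1) * esymmTrunc a (j + r) (r + 1)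
            * hsymmTruncZ a (j + r + 1) (M - r - 1)
        + (-1) ^ N * a (j + N) * esymmTrunc a (j + N) N
            * hsymmTruncZ a (j + N + 1) (M - N - 1) := by
  induction N with
  | zero => simp [esymmTrunc_zero, hsymmTruncZ_succ a j M]
  | succ N ih =>
    rw [sum_range_succ, ih, sum_range_succ, ← add_assoc j N 1,
      hsymmTruncZ_succ a (j + N + 1), esymmTrunc_succ]
    push_cast
    rw [sub_add_eq_sub_sub]
    ring

theorem sum_esymmTrunc_mul_hsymmTruncZ_eq_zero (j N : ℕ) {M : ℤ} (hM : 0 < M) (hMN : M ≤ N) :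
    ∑ r ∈ range (N + 1),
      (-1) ^ r * esymmTrunc a (j + r) r * hsymmTruncZ a (j + r + 1) (M - r) = 0 := by
  induction j with
  | zero =>
    rw [sum_esymmTrunc_mul_hsymmTruncZ_telescope, hsymmTruncZ_zero_vars_of_pos a hM,
      hsymmTruncZ_of_neg a _ (by omega : M - N - 1 < 0)]
    simp [esymmTrunc_of_lt a (Nat.lt_succ_self _)]
  | succ j ih =>
    rw [sum_esymmTrunc_mul_hsymmTruncZ_telescope,
      hsymmTruncZ_of_neg a _ (by omega : M - N - 1 < 0), mul_zero, add_zero, ← ih,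
      sum_range_succ', add_comm]
    congr 1
    · refine sum_congr rfl fun r _ => ?_
      rw [add_right_comm j 1 r, Nat.cast_succ, sub_add_eq_sub_sub, add_assoc j r 1]
    · simp [esymmTrunc_zero]

end SymmetricFunctions

theorem K_recurrence_general {R : Type*} [CommRing R] (n : ℕ) (a : ℕ → R)
    (c : ℤ → R) :
    ∀ j ∈ Finset.Icc 2 n, ∀ m ∈ Finset.Icc 2 j,
      ∑ r ∈ Finset.range (m + 1),
        (-1 : R) ^ r * esymmTrunc a (n - j + r) r * Kcoef n a c (m - r) (j - r) = 0 := by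
  intro j hj m hm
  rw [mem_Icc] at hj hm
  have hterm : ∀ r ∈ range (m + 1),
      (-1 : R) ^ r * esymmTrunc a (n - j + r) r * Kcoef n a c (m - r) (j - r)
        = (c 1 * c (j - m - 1) - c (j - m))
            * ((-1) ^ r * esymmTrunc a (n - j + r) r * hsymmTruncZ a (n - j + r + 1) (m - r))
          + (∑ i ∈ range n, a i) * c (j - m)
            * ((-1) ^ r * esymmTrunc a (n - j + r) r
              * hsymmTruncZ a (n - j + r + 1) ((m - 1 : ℤ) - r)) := by
    intro r hr
    have hrm : r ≤ m := Nat.lt_succ_iff.mp (mem_range.mp hr)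
    rw [Kcoef, show n - (j - r) = n - j + r by omega, Nat.cast_sub hrm,
      Nat.cast_sub (hrm.trans hm.2), sub_sub_sub_cancel_right, sub_right_comm (m : ℤ)]
    ring
  rw [sum_congr rfl hterm, sum_add_distrib, ← mul_sum, ← mul_sum,
    sum_esymmTrunc_mul_hsymmTruncZ_eq_zero a _ _ (by omega) le_rfl,
    sum_esymmTrunc_mul_hsymmTruncZ_eq_zero a _ _ (by omega) (by omega)]
  ring

/-- For all `j = 2, …, n` and `m = 2, …, j`,
`∑_{r=0}^m (−1)^r · e_r^{(n−j+r)} · K_{m−r, j−r} = 0`. -/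
theorem K_recurrence {R : Type*} [CommRing R] (n : ℕ) (hn : 2 ≤ n) (a : ℕ → R)
    (c : ℤ → R) (hc0 : c 0 = 1) (hcneg : ∀ i : ℤ, i < 0 → c i = 0) :
    ∀ j ∈ Finset.Icc 2 n, ∀ m ∈ Finset.Icc 2 j,
      ∑ r ∈ Finset.range (m + 1),
        (-1 : R) ^ r * esymmTrunc a (n - j + r) r * Kcoef n a c (m - r) (j - r) = 0 :=
  K_recurrence_general n a c
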